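/- For every connected bipartite graph G on at least 2 vertices, the independence complex of the complement of G is shellable. -/

import Mathlib

open SimpleGraph

variable {V : Type*}

/-- `S` is an independent set of `G`: no two (distinct) members are adjacent. -/
def IsIndepOn (G : SimpleGraph V) (S : Set V) : Prop :=
  S.Pairwise fun u w => ¬ G.Adj u w

/-- The closed neighborhood `N_G[v]` of `v` in `G`. -/
def closedNbhd (G : SimpleGraph V) (v : V) : Set V :=
  {u | G.Adj v u} ∪ {v}

/-- Vertex decomposability of the independence complex of the induced subgraph of `G`
on the vertex set `A`. -/
inductive VertexDecomp (G : SimpleGraph V) : Set V → Prop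
  | discrete (A : Set V) (h : ∀ u ∈ A, ∀ w ∈ A, ¬ G.Adj u w) : VertexDecomp G A
  | shed (A : Set V) (v : V) (hv : v ∈ A)
      (hshed : ∀ S : Set V, S ⊆ A \ closedNbhd G v → IsIndepOn G S →
        ∃ x ∈ A, G.Adj v x ∧ IsIndepOn G (insert x S))
      (hdel : VertexDecomp G (A \ {v}))
      (hlink : VertexDecomp G (A \ closedNbhd G v)) : VertexDecomp G A

/-- `v` is a shedding vertex of `H`: every independent set avoiding `N_H[v]` can be
extended by a neighbor of `v` to an independent set of `H \ {v}`. -/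
def IsSheddingVertex (H : SimpleGraph V) (v : V) : Prop :=
  ∀ S : Set V, S ∩ closedNbhd H v = ∅ → IsIndepOn H S →
    ∃ x, H.Adj v x ∧ IsIndepOn H (insert x S)

/-- `F` is a facet (maximal face) of the independence complex of `H`. -/
def IsIndepFacet {V : Type*} (H : SimpleGraph V) (F : Finset V) : Prop :=
  IsIndepOn H ↑F ∧ ∀ T : Finset V, IsIndepOn H ↑T → F ⊆ T → F = T

/-- The independence complex of `H` is shellable (nonpure sense of Björner–Wachs):
there is an ordering `F 0, …, F (t-1)` of its facets so that for all `j < i` there are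
`k < i` and `x ∈ F i` with `F i ∩ F j ⊆ F i ∩ F k = F i \ {x}`. -/
def IndepComplexShellable {V : Type*} [DecidableEq V] (H : SimpleGraph V) : Prop :=
  ∃ (t : ℕ) (F : Fin t → Finset V), Function.Injective F ∧
    (∀ S : Finset V, IsIndepFacet H S ↔ ∃ i, F i = S) ∧
    ∀ i j : Fin t, j < i → ∃ k : Fin t, k < i ∧ ∃ x ∈ F i,
      F i ∩ F k = (F i).erase x ∧ F i ∩ F j ⊆ F i ∩ F k

/-! ### Auxiliary lemmas -/

/-- Independent sets of the complement are cliques of the original graph. -/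
lemma isIndepOn_compl_iff (G : SimpleGraph V) (S : Set V) :
    IsIndepOn Gᶜ S ↔ ∀ u ∈ S, ∀ w ∈ S, u ≠ w → G.Adj u w := by
  unfold IsIndepOn
  constructor
  · intro h u hu w hw hne
    have h2 := h hu hw hne
    simp only [SimpleGraph.compl_adj] at h2
    push_neg at h2
    exact h2 hne
  · intro h u hu w hw hne
    simp only [SimpleGraph.compl_adj]
    push_neg
    intro _
    exact h u hu w hw hne

/-- A bipartite graph has no triangles. -/
lemma bipartite_no_triangle {G : SimpleGraph V} {V1 V2 : Set V}
    (hdisj : Disjoint V1 V2)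
    (hbip : ∀ u w, G.Adj u w → (u ∈ V1 ∧ w ∈ V2) ∨ (u ∈ V2 ∧ w ∈ V1))
    {x u w : V} (h1 : G.Adj u w) (h2 : G.Adj x u) (h3 : G.Adj x w) : False := by
  have hd : ∀ a, a ∈ V1 → a ∈ V2 → False := fun a ha hb => Set.disjoint_left.mp hdisj ha hb
  have hdu := hd u
  have hdw := hd w
  have hdx := hd x
  rcases hbip u w h1 with ⟨hu, hw⟩ | ⟨hu, hw⟩ <;>
    rcases hbip x u h2 with ⟨hx, hu'⟩ | ⟨hx, hu'⟩ <;>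
      rcases hbip x w h3 with ⟨hx', hw'⟩ | ⟨hx', hw'⟩ <;> tauto

/-- In a connected graph with at least two vertices, every vertex has a neighbor. -/
lemma exists_neighbor_of_connected [Fintype V] {G : SimpleGraph V}
    (hconn : G.Connected) (hcard : 2 ≤ Fintype.card V) (u : V) : ∃ y, G.Adj u y := by
  obtain ⟨w, hw⟩ := Fintype.exists_ne_of_one_lt_card (by omega) u
  obtain ⟨p⟩ := hconn u w
  cases p with
  | nil => exact absurd rfl hw
  | cons h _ => exact ⟨_, h⟩

/-- A pair of adjacent vertices gives an independent set of the complement. -/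
lemma pair_indep_compl [DecidableEq V] {G : SimpleGraph V} {u w : V} (h : G.Adj u w) :
    IsIndepOn Gᶜ (({u, w} : Finset V) : Set V) := by
  rw [isIndepOn_compl_iff]
  intro a ha b hb hne
  simp only [Finset.coe_insert, Finset.coe_singleton, Set.mem_insert_iff,
    Set.mem_singleton_iff] at ha hb
  rcases ha with rfl | rfl <;> rcases hb with rfl | rfl
  · exact absurd rfl hne
  · exact h
  · exact h.symm
  · exact absurd rfl hne

/-- Characterization of facets of the independence complex of the complement of a
connected bipartite graph: they are exactly the edges. -/
lemma facet_compl_iff [Fintype V] [DecidableEq V] {G : SimpleGraph V} {V1 V2 : Set V}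
    (hdisj : Disjoint V1 V2)
    (hbip : ∀ u w, G.Adj u w → (u ∈ V1 ∧ w ∈ V2) ∨ (u ∈ V2 ∧ w ∈ V1))
    (hconn : G.Connected) (hcard : 2 ≤ Fintype.card V) (S : Finset V) :
    IsIndepFacet Gᶜ S ↔ ∃ u w, G.Adj u w ∧ S = {u, w} := by
  constructor
  · rintro ⟨hind, hmax⟩
    have hclique := (isIndepOn_compl_iff G _).mp hind
    have hc2 : S.card ≤ 2 := by
      by_contra hgt
      push_neg at hgt
      obtain ⟨a, b, c, ha, hb, hc, hab, hac, hbc⟩ := Finset.two_lt_card_iff.mp hgt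
      exact bipartite_no_triangle hdisj hbip
        (hclique b (by exact_mod_cast hb) c (by exact_mod_cast hc) hbc)
        (hclique a (by exact_mod_cast ha) b (by exact_mod_cast hb) hab)
        (hclique a (by exact_mod_cast ha) c (by exact_mod_cast hc) hac)
    interval_cases h : S.card
    · -- S = ∅
      have hS : S = ∅ := Finset.card_eq_zero.mp h
      obtain ⟨v⟩ := hconn.nonempty
      obtain ⟨y, hy⟩ := exists_neighbor_of_connected hconn hcard v
      have := hmax {v, y} (pair_indep_compl hy) (by rw [hS]; exact Finset.empty_subset _)
      exfalso
      rw [hS] at this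
      have : v ∈ (∅ : Finset V) := this ▸ Finset.mem_insert_self v {y}
      exact absurd this (Finset.notMem_empty v)
    · -- S = {v}
      obtain ⟨v, hS⟩ := Finset.card_eq_one.mp h
      obtain ⟨y, hy⟩ := exists_neighbor_of_connected hconn hcard v
      have hsub : S ⊆ {v, y} := by rw [hS]; intro z hz; simp at hz; simp [hz]
      have := hmax {v, y} (pair_indep_compl hy) hsub
      exfalso
      rw [hS] at this
      have hyv : y ∈ ({v} : Finset V) := this ▸ Finset.mem_insert_of_mem (Finset.mem_singleton_self y)
      rw [Finset.mem_singleton] at hyv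
      exact G.irrefl (hyv ▸ hy)
    · -- S = {u, w}
      obtain ⟨u, w, huw, hS⟩ := Finset.card_eq_two.mp h
      refine ⟨u, w, ?_, hS⟩
      exact hclique u (by rw [hS]; simp) w (by rw [hS]; simp) huw
  · rintro ⟨u, w, hadj, rfl⟩
    refine ⟨pair_indep_compl hadj, ?_⟩
    intro T hT hsub
    refine Finset.Subset.antisymm hsub ?_
    intro x hx
    by_contra hxS
    simp only [Finset.mem_insert, Finset.mem_singleton, not_or] at hxS
    have hclique := (isIndepOn_compl_iff G _).mp hT
    have huT : u ∈ T := hsub (Finset.mem_insert_self u {w})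
    have hwT : w ∈ T := hsub (Finset.mem_insert_of_mem (Finset.mem_singleton_self w))
    exact bipartite_no_triangle hdisj hbip hadj
      (hclique x (by exact_mod_cast hx) u (by exact_mod_cast huT) hxS.1)
      (hclique x (by exact_mod_cast hx) w (by exact_mod_cast hwT) hxS.2)

lemma pair_erase_right [DecidableEq V] {a b : V} (hab : a ≠ b) :
    ({a, b} : Finset V).erase b = {a} := by
  ext z
  simp only [Finset.mem_erase, Finset.mem_insert, Finset.mem_singleton]
  constructor
  · rintro ⟨h1, h2 | h2⟩
    · exact h2
    · exact absurd h2 h1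
  · rintro rfl
    exact ⟨hab, Or.inl rfl⟩

/-- The intersection of two distinct 2-element sets with a common element is obtained
by erasing one element. -/
lemma pair_inter_erase [DecidableEq V] {A B : Finset V} (hA : A.card = 2) (hB : B.card = 2)
    (hne : A ≠ B) {y : V} (hy : y ∈ A ∩ B) : ∃ x ∈ A, A ∩ B = A.erase x := by
  have hsub : A ∩ B ⊆ A := Finset.inter_subset_left
  have hcle : (A ∩ B).card ≤ 2 := hA ▸ Finset.card_le_card hsub
  have hcpos : 1 ≤ (A ∩ B).card := Finset.card_pos.mpr ⟨y, hy⟩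
  have hc1 : (A ∩ B).card = 1 := by
    rcases Nat.lt_or_ge (A ∩ B).card 2 with hlt | hge
    · omega
    · exfalso
      have h2 : A ∩ B = A := Finset.eq_of_subset_of_card_le hsub (by omega)
      have hAB : A ⊆ B := by rw [← Finset.inter_eq_left]; exact h2
      exact hne (Finset.eq_of_subset_of_card_le hAB (by omega))
  obtain ⟨z, hz⟩ := Finset.card_eq_one.mp hc1
  have hzy : z = y := by
    have := hy
    rw [hz, Finset.mem_singleton] at this
    exact this.symm
  subst hzy
  obtain ⟨a, b, hab, hAab⟩ := Finset.card_eq_two.mp hA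
  have hzA : z ∈ A := hsub (hz ▸ Finset.mem_singleton_self z)
  rw [hAab] at hzA
  rcases Finset.mem_insert.mp hzA with rfl | hzb
  · refine ⟨b, by rw [hAab]; simp, ?_⟩
    rw [hz, hAab, pair_erase_right hab]
  · rw [Finset.mem_singleton] at hzb
    subst hzb
    refine ⟨a, by rw [hAab]; simp, ?_⟩
    rw [hz, hAab, Finset.pair_comm a z, pair_erase_right (Ne.symm hab)]

/-- Distance-based sorting key for finsets of vertices. -/
noncomputable def distKey (G : SimpleGraph V) (v0 : V) (S : Finset V) : ℕ :=
  if h : S.Nonempty then S.inf' h (G.dist v0) else 0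

lemma distKey_le (G : SimpleGraph V) (v0 : V) {S : Finset V} {x : V} (hx : x ∈ S) :
    distKey G v0 S ≤ G.dist v0 x := by
  rw [distKey, dif_pos ⟨x, hx⟩]
  exact Finset.inf'_le _ hx

lemma distKey_exists (G : SimpleGraph V) (v0 : V) {S : Finset V} (hS : S.Nonempty) :
    ∃ x ∈ S, distKey G v0 S = G.dist v0 x := by
  rw [distKey, dif_pos hS]
  exact Finset.exists_mem_eq_inf' hS _

theorem complement_of_connected_bipartite_shellable {V : Type*} [Fintype V] [DecidableEq V]
    (G : SimpleGraph V) (V1 V2 : Set V)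
    (hunion : V1 ∪ V2 = Set.univ) (hdisj : Disjoint V1 V2)
    (hbip : ∀ u w, G.Adj u w → (u ∈ V1 ∧ w ∈ V2) ∨ (u ∈ V2 ∧ w ∈ V1))
    (hconn : G.Connected) (hcard : 2 ≤ Fintype.card V) :
    IndepComplexShellable Gᶜ := by
  classical
  obtain ⟨v0⟩ := hconn.nonempty
  set key : Finset V → ℕ := distKey G v0 with hkey
  -- facets are edges
  have hfacet : ∀ S : Finset V, IsIndepFacet Gᶜ S ↔ ∃ u w, G.Adj u w ∧ S = {u, w} :=
    facet_compl_iff hdisj hbip hconn hcard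
  set facets : Finset (Finset V) := Finset.univ.filter (fun S => IsIndepFacet Gᶜ S)
    with hfacets
  set l : List (Finset V) :=
    facets.toList.mergeSort (fun S T => decide (key S ≤ key T)) with hl
  have hperm : l.Perm facets.toList := List.mergeSort_perm _ _
  have hnd : l.Nodup := hperm.nodup_iff.mpr facets.nodup_toList
  have hsorted : l.Pairwise (fun S T => key S ≤ key T) := by
    have := List.pairwise_mergeSort (le := fun S T : Finset V => decide (key S ≤ key T))
      (fun a b c h1 h2 => by simp only [decide_eq_true_eq] at h1 h2 ⊢; omega)
      (fun a b => by simp [le_total]) facets.toList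
    rw [← hl] at this
    exact this.imp (by simp)
  have hmeml : ∀ S : Finset V, S ∈ l ↔ IsIndepFacet Gᶜ S := by
    intro S
    rw [hperm.mem_iff, Finset.mem_toList, hfacets, Finset.mem_filter]
    simp
  refine ⟨l.length, l.get, List.nodup_iff_injective_get.mp hnd, ?_, ?_⟩
  · intro S
    exact (hmeml S).symm.trans List.mem_iff_get
  · intro i j hji
    have hipos : (0 : ℕ) < i := lt_of_le_of_lt (Nat.zero_le j) hji
    -- facts about F i
    have hfi : IsIndepFacet Gᶜ (l.get i) :=
      (hmeml _).mp (List.mem_iff_get.mpr ⟨i, rfl⟩)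
    obtain ⟨u, w, hadj, hFi⟩ := (hfacet _).mp hfi
    -- wlog dist v0 u ≤ dist v0 w
    obtain ⟨u, w, hadj, hFi, hule⟩ :
        ∃ u w, G.Adj u w ∧ l.get i = {u, w} ∧ G.dist v0 u ≤ G.dist v0 w := by
      rcases le_total (G.dist v0 u) (G.dist v0 w) with h | h
      · exact ⟨u, w, hadj, hFi, h⟩
      · exact ⟨w, u, hadj.symm, by rw [hFi, Finset.pair_comm], h⟩
    have huw : u ≠ w := hadj.ne
    have hkeyFi : key (l.get i) = G.dist v0 u := by
      obtain ⟨x, hxmem, hxeq⟩ := distKey_exists G v0 (S := l.get i) ⟨u, by rw [hFi]; simp⟩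
      rw [← hkey] at hxeq
      rw [hFi] at hxmem
      rcases Finset.mem_insert.mp hxmem with rfl | hx
      · exact hxeq
      · rw [Finset.mem_singleton] at hx
        subst hx
        have h1 : key (l.get i) ≤ G.dist v0 u := by
          rw [hkey]; exact distKey_le G v0 (by rw [hFi]; simp)
        omega
    -- cardinalities of facets
    have hcard2 : ∀ n : Fin l.length, (l.get n).card = 2 := by
      intro n
      obtain ⟨a, b, hab, hEq⟩ := (hfacet _).mp ((hmeml _).mp (List.mem_iff_get.mpr ⟨n, rfl⟩))
      rw [hEq, Finset.card_insert_of_notMem (by simp [hab.ne]), Finset.card_singleton]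
    -- sortedness in index form
    have hsortidx : ∀ m n : Fin l.length, m < n → key (l.get m) ≤ key (l.get n) :=
      fun m n h => List.pairwise_iff_get.mp hsorted m n h
    -- key claim: there is k < i with nonempty intersection with F i
    have hclaim : ∃ k : Fin l.length, k < i ∧ (l.get i ∩ l.get k).Nonempty := by
      by_cases hv0 : u = v0
      · -- use index 0
        subst hv0
        have h0lt : 0 < l.length := Nat.lt_of_le_of_lt (Nat.zero_le i.1) i.isLt
        refine ⟨⟨0, h0lt⟩, hipos, ?_⟩
        have h0le : key (l.get ⟨0, h0lt⟩) ≤ key (l.get i) := hsortidx _ i hipos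
        have hdist0 : G.dist u u = 0 := by simp
        rw [hkeyFi, hdist0, Nat.le_zero] at h0le
        obtain ⟨x, hxmem, hxeq⟩ := distKey_exists G u
          (S := l.get ⟨0, h0lt⟩)
          (Finset.card_pos.mp (by rw [hcard2]; omega))
        rw [← hkey] at hxeq
        rw [h0le] at hxeq
        have hxv0 : u = x := (hconn.dist_eq_zero_iff).mp hxeq.symm
        subst hxv0
        exact ⟨u, Finset.mem_inter.mpr ⟨by rw [hFi]; simp, hxmem⟩⟩
      · -- u ≠ v0 : find a neighbor of u closer to v0
        have hd : 0 < G.dist v0 u := hconn.pos_dist_of_ne (Ne.symm hv0)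
        obtain ⟨p, hp⟩ := (hconn u v0).exists_walk_length_eq_dist
        have hplen : p.length = G.dist v0 u := by rw [hp, SimpleGraph.dist_comm]
        cases p with
        | nil => exact absurd rfl hv0
        | cons hadj' q =>
          rename_i y
          have hdy : G.dist v0 y < G.dist v0 u := by
            have h1 : G.dist v0 y ≤ q.length := by
              rw [SimpleGraph.dist_comm]; exact SimpleGraph.dist_le q
            simp [SimpleGraph.Walk.length_cons] at hplen
            omega
          -- the edge {u, y} is a facet
          have hfuy : IsIndepFacet Gᶜ ({u, y} : Finset V) := (hfacet _).mpr ⟨u, y, hadj', rfl⟩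
          obtain ⟨m, hm⟩ := List.mem_iff_get.mp ((hmeml _).mpr hfuy)
          have hkeym : key (l.get m) < key (l.get i) := by
            rw [hm, hkeyFi]
            calc key ({u, y} : Finset V) ≤ G.dist v0 y := by
                  rw [hkey]; exact distKey_le G v0 (by simp)
              _ < G.dist v0 u := hdy
          have hmi : m < i := by
            by_contra hle
            push_neg at hle
            rcases eq_or_lt_of_le hle with heq | hlt
            · rw [heq] at hkeym; omega
            · have := hsortidx i m hlt; omega
          exact ⟨m, hmi, ⟨u, Finset.mem_inter.mpr ⟨by rw [hFi]; simp, by rw [hm]; simp⟩⟩⟩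
    -- choose k : if F i ∩ F j is nonempty use j, otherwise use claim
    by_cases hij : (l.get i ∩ l.get j).Nonempty
    · obtain ⟨y, hy⟩ := hij
      have hne : l.get i ≠ l.get j :=
        fun h => absurd (List.nodup_iff_injective_get.mp hnd h) (Fin.ne_of_gt hji)
      obtain ⟨x, hxmem, hxeq⟩ := pair_inter_erase (hcard2 i) (hcard2 j) hne hy
      exact ⟨j, hji, x, hxmem, hxeq, subset_rfl⟩
    · obtain ⟨k, hki, y, hy⟩ := hclaim
      have hne : l.get i ≠ l.get k :=
        fun h => absurd (List.nodup_iff_injective_get.mp hnd h) (Fin.ne_of_gt hki)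
      obtain ⟨x, hxmem, hxeq⟩ := pair_inter_erase (hcard2 i) (hcard2 k) hne hy
      refine ⟨k, hki, x, hxmem, hxeq, ?_⟩
      rw [Finset.not_nonempty_iff_eq_empty.mp hij]
      exact Finset.empty_subset _
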